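/- Let ℓ, η, m be positive integers and let A be an ℓ×ℓ matrix over F = ℝ or ℂ. Let ω₂ be the smallest singular value (the 2ηmℓ-th largest singular value) of the 2ηmℓ × (2η+1)mℓ block matrix [[E_η⊗I_{mℓ}, I_{ηm}⊗A],[F_η⊗I_{mℓ}, I_{ηm}⊗I_ℓ]]. Then ω₂ ≥ 1/(1 + 2η·max(1, ‖A‖₂^η)). -/

import Mathlib

open Matrix
open scoped Kronecker

noncomputable section

/-- The `k × (k+1)` matrix `E_k = [I_k 0]`. -/
def Ek (𝕜 : Type*) [RCLike 𝕜] (k : ℕ) : Matrix (Fin k) (Fin (k+1)) 𝕜 :=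
  Matrix.of fun i j => if (j : ℕ) = (i : ℕ) then 1 else 0

/-- The `k × (k+1)` matrix `F_k = [0 I_k]`. -/
def Fk (𝕜 : Type*) [RCLike 𝕜] (k : ℕ) : Matrix (Fin k) (Fin (k+1)) 𝕜 :=
  Matrix.of fun i j => if (j : ℕ) = (i : ℕ) + 1 then 1 else 0

/-- The standard unit vector `(0, …, 0, 1)ᵀ` of size `k+1`. -/
def evec (𝕜 : Type*) [RCLike 𝕜] (k : ℕ) : Fin (k+1) → 𝕜 :=
  fun i => if (i : ℕ) = k then 1 else 0

variable {𝕜 : Type*} [RCLike 𝕜]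

/-- Frobenius norm of a matrix. -/
def frobNorm {p q : Type*} [Fintype p] [Fintype q] (M : Matrix p q 𝕜) : ℝ :=
  Real.sqrt (∑ i, ∑ j, ‖M i j‖ ^ 2)

/-- Spectral norm (largest singular value) of a matrix. -/
def specNorm {p q : Type*} [Fintype p] [Fintype q] [DecidableEq p] (M : Matrix p q 𝕜) : ℝ :=
  Real.sqrt (⨆ i, (Matrix.isHermitian_mul_conjTranspose_self M).eigenvalues i)

/-- Smallest singular value of a `p × q` matrix with `p ≤ q`
(the `p`-th largest singular value). -/
def sigmaMin {p q : Type*} [Fintype p] [Fintype q] [DecidableEq p] (M : Matrix p q 𝕜) : ℝ :=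
  Real.sqrt (⨅ i, (Matrix.isHermitian_mul_conjTranspose_self M).eigenvalues i)

/-- Euclidean norm of a vector. -/
def vecNorm {q : Type*} [Fintype q] (x : q → 𝕜) : ℝ :=
  Real.sqrt (∑ i, ‖x i‖ ^ 2)

/-- Frobenius norm of the pencil `P.1 - λ • P.2`. -/
def pFrob {p q : Type*} [Fintype p] [Fintype q] (P : Matrix p q 𝕜 × Matrix p q 𝕜) : ℝ :=
  Real.sqrt (frobNorm P.1 ^ 2 + frobNorm P.2 ^ 2)

/-- Spectral norm of the pencil `P.1 - λ • P.2`. -/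
def pSpec {p q : Type*} [Fintype p] [Fintype q] [DecidableEq p]
    (P : Matrix p q 𝕜 × Matrix p q 𝕜) : ℝ :=
  Real.sqrt (specNorm P.1 ^ 2 + specNorm P.2 ^ 2)

/-- A 3×3 block matrix. -/
def blocks3 {R1 R2 R3 C1 C2 C3 : Type*}
    (M11 : Matrix R1 C1 𝕜) (M12 : Matrix R1 C2 𝕜) (M13 : Matrix R1 C3 𝕜)
    (M21 : Matrix R2 C1 𝕜) (M22 : Matrix R2 C2 𝕜) (M23 : Matrix R2 C3 𝕜)
    (M31 : Matrix R3 C1 𝕜) (M32 : Matrix R3 C2 𝕜) (M33 : Matrix R3 C3 𝕜) :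
    Matrix (R1 ⊕ (R2 ⊕ R3)) (C1 ⊕ (C2 ⊕ C3)) 𝕜 :=
  Matrix.fromBlocks M11 (Matrix.fromCols M12 M13) (Matrix.fromRows M21 M31)
    (Matrix.fromBlocks M22 M23 M32 M33)

/-- `K̂₂ᵀ C = (e_{η+1} ⊗ I_m) C`. -/
def colUnit {m ℓ : ℕ} (η : ℕ) (C : Matrix (Fin m) (Fin ℓ) 𝕜) :
    Matrix (Fin (η+1) × Fin m) (Fin ℓ) 𝕜 :=
  Matrix.of fun i j => evec 𝕜 η i.1 * C i.2 j

/-- `B K̂₁ = B (e_{ε+1}ᵀ ⊗ I_n)`. -/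
def rowUnit {n ℓ : ℕ} (ε : ℕ) (B : Matrix (Fin ℓ) (Fin n) 𝕜) :
    Matrix (Fin ℓ) (Fin (ε+1) × Fin n) 𝕜 :=
  Matrix.of fun i j => evec 𝕜 ε j.1 * B i j.2

/-- Row index type of a block Kronecker pencil. -/
abbrev SRow (m ℓ ε η n : ℕ) := (Fin (η+1) × Fin m) ⊕ (Fin ℓ ⊕ (Fin ε × Fin n))

/-- Column index type of a block Kronecker pencil. -/
abbrev SCol (m ℓ ε η n : ℕ) := (Fin (ε+1) × Fin n) ⊕ (Fin ℓ ⊕ (Fin η × Fin m))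

/-- The block Kronecker pencil
`S(λ) = [[M(λ), K̂₂ᵀC, K₂ᵀ(λ)], [BK̂₁, A-λI, 0], [K₁(λ), 0, 0]]`
represented as a pair `(Sa, Sb)` with `S(λ) = Sa - λ Sb`. -/
def blockKron (m n ℓ ε η : ℕ) (A : Matrix (Fin ℓ) (Fin ℓ) 𝕜) (B : Matrix (Fin ℓ) (Fin n) 𝕜)
    (C : Matrix (Fin m) (Fin ℓ) 𝕜)
    (M : Matrix (Fin (η+1) × Fin m) (Fin (ε+1) × Fin n) 𝕜 ×
         Matrix (Fin (η+1) × Fin m) (Fin (ε+1) × Fin n) 𝕜) :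
    Matrix (SRow m ℓ ε η n) (SCol m ℓ ε η n) 𝕜 × Matrix (SRow m ℓ ε η n) (SCol m ℓ ε η n) 𝕜 :=
  (blocks3 M.1 (colUnit η C) ((Ek 𝕜 η)ᵀ ⊗ₖ (1 : Matrix (Fin m) (Fin m) 𝕜))
      (rowUnit ε B) A 0
      (Ek 𝕜 ε ⊗ₖ (1 : Matrix (Fin n) (Fin n) 𝕜)) 0 0,
   blocks3 M.2 0 ((Fk 𝕜 η)ᵀ ⊗ₖ (1 : Matrix (Fin m) (Fin m) 𝕜))
      0 1 0
      (Fk 𝕜 ε ⊗ₖ (1 : Matrix (Fin n) (Fin n) 𝕜)) 0 0)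

/-- Row index type of the matrix `T`. -/
abbrev TRow (m ℓ ε η n : ℕ) :=
  (((Fin η × Fin m) × Fin ℓ) ⊕ ((Fin η × Fin m) × Fin ℓ)) ⊕
  (((Fin ℓ × (Fin ε × Fin n)) ⊕ (Fin ℓ × (Fin ε × Fin n))) ⊕
   (((Fin η × Fin m) × (Fin ε × Fin n)) ⊕ ((Fin η × Fin m) × (Fin ε × Fin n))))

/-- Column index type of the matrix `T`. -/
abbrev TCol (m ℓ ε η n : ℕ) :=
  (((Fin (η+1) × Fin m) × Fin ℓ) ⊕ ((Fin η × Fin m) × Fin ℓ)) ⊕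
  (((Fin ℓ × (Fin ε × Fin n)) ⊕ (Fin ℓ × (Fin (ε+1) × Fin n))) ⊕
   (((Fin (η+1) × Fin m) × (Fin ε × Fin n)) ⊕ ((Fin η × Fin m) × (Fin (ε+1) × Fin n))))

/-- The 6×6 block matrix `T`. -/
def Tmat (m n ℓ ε η : ℕ) (A : Matrix (Fin ℓ) (Fin ℓ) 𝕜) (B : Matrix (Fin ℓ) (Fin n) 𝕜)
    (C : Matrix (Fin m) (Fin ℓ) 𝕜) : Matrix (TRow m ℓ ε η n) (TCol m ℓ ε η n) 𝕜 :=
  Matrix.fromRows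
    (Matrix.fromCols
      (Matrix.fromBlocks
        ((Ek 𝕜 η ⊗ₖ (1 : Matrix (Fin m) (Fin m) 𝕜)) ⊗ₖ (1 : Matrix (Fin ℓ) (Fin ℓ) 𝕜))
        ((1 : Matrix (Fin η × Fin m) (Fin η × Fin m) 𝕜) ⊗ₖ A)
        ((Fk 𝕜 η ⊗ₖ (1 : Matrix (Fin m) (Fin m) 𝕜)) ⊗ₖ (1 : Matrix (Fin ℓ) (Fin ℓ) 𝕜))
        ((1 : Matrix (Fin η × Fin m) (Fin η × Fin m) 𝕜) ⊗ₖ (1 : Matrix (Fin ℓ) (Fin ℓ) 𝕜)))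
      (Matrix.fromCols 0
        (Matrix.fromBlocks 0
          ((1 : Matrix (Fin η × Fin m) (Fin η × Fin m) 𝕜) ⊗ₖ (rowUnit ε B))
          0 0)))
    (Matrix.fromRows
      (Matrix.fromCols 0
        (Matrix.fromCols
          (Matrix.fromBlocks
            (Aᵀ ⊗ₖ (1 : Matrix (Fin ε × Fin n) (Fin ε × Fin n) 𝕜))
            ((1 : Matrix (Fin ℓ) (Fin ℓ) 𝕜) ⊗ₖ (Ek 𝕜 ε ⊗ₖ (1 : Matrix (Fin n) (Fin n) 𝕜)))
            ((1 : Matrix (Fin ℓ) (Fin ℓ) 𝕜) ⊗ₖ (1 : Matrix (Fin ε × Fin n) (Fin ε × Fin n) 𝕜))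
            ((1 : Matrix (Fin ℓ) (Fin ℓ) 𝕜) ⊗ₖ (Fk 𝕜 ε ⊗ₖ (1 : Matrix (Fin n) (Fin n) 𝕜))))
          (Matrix.fromBlocks
            (Matrix.of fun (i : Fin ℓ × (Fin ε × Fin n))
                (j : (Fin (η+1) × Fin m) × (Fin ε × Fin n)) =>
              evec 𝕜 η j.1.1 * C j.1.2 i.1 * (if i.2 = j.2 then 1 else 0))
            0 0 0)))
      (Matrix.fromCols 0
        (Matrix.fromCols 0
          (Matrix.fromBlocks
            ((Ek 𝕜 η ⊗ₖ (1 : Matrix (Fin m) (Fin m) 𝕜)) ⊗ₖ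
              (1 : Matrix (Fin ε × Fin n) (Fin ε × Fin n) 𝕜))
            ((1 : Matrix (Fin η × Fin m) (Fin η × Fin m) 𝕜) ⊗ₖ
              (Ek 𝕜 ε ⊗ₖ (1 : Matrix (Fin n) (Fin n) 𝕜)))
            ((Fk 𝕜 η ⊗ₖ (1 : Matrix (Fin m) (Fin m) 𝕜)) ⊗ₖ
              (1 : Matrix (Fin ε × Fin n) (Fin ε × Fin n) 𝕜))
            ((1 : Matrix (Fin η × Fin m) (Fin η × Fin m) 𝕜) ⊗ₖ
              (Fk 𝕜 ε ⊗ₖ (1 : Matrix (Fin n) (Fin n) 𝕜)))))))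

/-- The 6×6 block matrix `ΔT` built from the blocks of the perturbation pencil. -/
def DeltaT (m n ℓ ε η : ℕ)
    (Δ12a Δ12b : Matrix (Fin (η+1) × Fin m) (Fin ℓ) 𝕜)
    (Δ13a Δ13b : Matrix (Fin (η+1) × Fin m) (Fin η × Fin m) 𝕜)
    (Δ21a Δ21b : Matrix (Fin ℓ) (Fin (ε+1) × Fin n) 𝕜)
    (Δ22a Δ22b : Matrix (Fin ℓ) (Fin ℓ) 𝕜)
    (Δ23a Δ23b : Matrix (Fin ℓ) (Fin η × Fin m) 𝕜)
    (Δ31a Δ31b : Matrix (Fin ε × Fin n) (Fin (ε+1) × Fin n) 𝕜)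
    (Δ32a Δ32b : Matrix (Fin ε × Fin n) (Fin ℓ) 𝕜) :
    Matrix (TRow m ℓ ε η n) (TCol m ℓ ε η n) 𝕜 :=
  Matrix.fromRows
    (Matrix.fromCols
      (Matrix.fromBlocks
        (Δ13aᵀ ⊗ₖ (1 : Matrix (Fin ℓ) (Fin ℓ) 𝕜))
        ((1 : Matrix (Fin η × Fin m) (Fin η × Fin m) 𝕜) ⊗ₖ Δ22a)
        (Δ13bᵀ ⊗ₖ (1 : Matrix (Fin ℓ) (Fin ℓ) 𝕜))
        ((1 : Matrix (Fin η × Fin m) (Fin η × Fin m) 𝕜) ⊗ₖ Δ22b))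
      (Matrix.fromCols 0
        (Matrix.fromBlocks 0 ((1 : Matrix (Fin η × Fin m) (Fin η × Fin m) 𝕜) ⊗ₖ Δ21a)
          0 ((1 : Matrix (Fin η × Fin m) (Fin η × Fin m) 𝕜) ⊗ₖ Δ21b))))
    (Matrix.fromRows
      (Matrix.fromCols 0
        (Matrix.fromCols
          (Matrix.fromBlocks
            (Δ22aᵀ ⊗ₖ (1 : Matrix (Fin ε × Fin n) (Fin ε × Fin n) 𝕜))
            ((1 : Matrix (Fin ℓ) (Fin ℓ) 𝕜) ⊗ₖ Δ31a)
            (Δ22bᵀ ⊗ₖ (1 : Matrix (Fin ε × Fin n) (Fin ε × Fin n) 𝕜))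
            ((1 : Matrix (Fin ℓ) (Fin ℓ) 𝕜) ⊗ₖ Δ31b))
          (Matrix.fromBlocks
            (Δ12aᵀ ⊗ₖ (1 : Matrix (Fin ε × Fin n) (Fin ε × Fin n) 𝕜)) 0
            (Δ12bᵀ ⊗ₖ (1 : Matrix (Fin ε × Fin n) (Fin ε × Fin n) 𝕜)) 0)))
      (Matrix.fromCols
        (Matrix.fromBlocks 0 ((1 : Matrix (Fin η × Fin m) (Fin η × Fin m) 𝕜) ⊗ₖ Δ32a)
          0 ((1 : Matrix (Fin η × Fin m) (Fin η × Fin m) 𝕜) ⊗ₖ Δ32b))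
        (Matrix.fromCols
          (Matrix.fromBlocks
            (Δ23aᵀ ⊗ₖ (1 : Matrix (Fin ε × Fin n) (Fin ε × Fin n) 𝕜)) 0
            (Δ23bᵀ ⊗ₖ (1 : Matrix (Fin ε × Fin n) (Fin ε × Fin n) 𝕜)) 0)
          (Matrix.fromBlocks
            (Δ13aᵀ ⊗ₖ (1 : Matrix (Fin ε × Fin n) (Fin ε × Fin n) 𝕜))
            ((1 : Matrix (Fin η × Fin m) (Fin η × Fin m) 𝕜) ⊗ₖ Δ31a)
            (Δ13bᵀ ⊗ₖ (1 : Matrix (Fin ε × Fin n) (Fin ε × Fin n) 𝕜))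
            ((1 : Matrix (Fin η × Fin m) (Fin η × Fin m) 𝕜) ⊗ₖ Δ31b)))))

/-- `(Λ_k(x) ⊗ I_m)` where `Λ_k(x) = (x^k, …, x, 1)ᵀ`. -/
def LamI (𝕜 : Type*) [RCLike 𝕜] (k m : ℕ) (x : 𝕜) :
    Matrix (Fin (k+1) × Fin m) (Fin m) 𝕜 :=
  Matrix.of fun i j => if i.2 = j then x ^ (k - (i.1 : ℕ)) else 0

/-- `(A, B)` is controllable if the controllability matrix `[B, AB, …, A^{ℓ-1}B]`
has full rank `ℓ`. -/
def Controllable {ℓ n : ℕ} (A : Matrix (Fin ℓ) (Fin ℓ) 𝕜)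
    (B : Matrix (Fin ℓ) (Fin n) 𝕜) : Prop :=
  (Matrix.of fun (i : Fin ℓ) (p : Fin ℓ × Fin n) => (A ^ (p.1 : ℕ) * B) i p.2).rank = ℓ

/-- `(A, C)` is observable if `(Aᵀ, Cᵀ)` is controllable. -/
def Observable {ℓ m : ℕ} (A : Matrix (Fin ℓ) (Fin ℓ) 𝕜)
    (C : Matrix (Fin m) (Fin ℓ) 𝕜) : Prop :=
  Controllable Aᵀ Cᵀ

end

/-!
Let `S` be the block matrix of the theorem and split `x` into blocks `x = (p, q)`. The blocks of
`Sᴴ x` are then `p j + q (j - 1)` and `(I_m ⊗ A)ᴴ p j + q j`. Eliminating `q` leaves a recurrence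
`p j = u j + (I_m ⊗ A)ᴴ p (j - 1)` whose increments `u j` are differences of blocks of `Sᴴ x`.
So `p j` and `(I_m ⊗ A)ᴴ p j` are sums of terms `((I_m ⊗ A)ᴴ)^e u k` with `e ≤ η`, each of norm
at most `max 1 ‖A‖₂^η · ‖u k‖`. Cauchy–Schwarz then gives `‖x‖ ≤ (1 + 2η max 1 ‖A‖₂^η) ‖Sᴴ x‖`,
and `σ_min(S)` is the minimum of `‖Sᴴ x‖` over unit vectors `x`.
-/

open Finset

lemma pow_le_max_one_pow {N : ℝ} (hN : 0 ≤ N) {e n : ℕ} (he : e ≤ n) :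
    N ^ e ≤ max 1 (N ^ n) := by
  rcases le_total N 1 with h | h
  · exact (pow_le_one₀ hN h).trans (le_max_left _ _)
  · exact (pow_le_pow_right₀ h he).trans (le_max_right _ _)

lemma sum_sq_add_sq_le_of_le_sum {n : ℕ} {a b c d : ℕ → ℝ} {M : ℝ} (hM : 0 ≤ M)
    (hc : ∀ j, 0 ≤ c j) (hd : ∀ j, 0 ≤ d j)
    (ha : ∀ j ∈ range n, 0 ≤ a j ∧ a j ≤ M * ∑ k ∈ range n, (c k + d k))
    (hb : ∀ j ∈ range n, 0 ≤ b j ∧ b j ≤ d j + M * ∑ k ∈ range n, (c k + d k)) :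
    ∑ j ∈ range n, (a j ^ 2 + b j ^ 2) ≤
      (1 + 2 * n * M) ^ 2 * ∑ j ∈ range n, (c j ^ 2 + d j ^ 2) := by
  set V := ∑ k ∈ range n, (c k + d k)
  set G := ∑ j ∈ range n, (c j ^ 2 + d j ^ 2)
  have hV : 0 ≤ V := sum_nonneg fun k _ => add_nonneg (hc k) (hd k)
  have hV2 : V ^ 2 ≤ 2 * n * G := calc
    V ^ 2 ≤ n * ∑ k ∈ range n, (c k + d k) ^ 2 := by
      simpa using sq_sum_le_card_mul_sum_sq (s := range n) (f := fun k => c k + d k)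
    _ ≤ n * ∑ k ∈ range n, 2 * (c k ^ 2 + d k ^ 2) := by
      gcongr with k
      nlinarith [sq_nonneg (c k - d k)]
    _ = 2 * n * G := by rw [← mul_sum]; ring
  have hdV : ∑ j ∈ range n, d j ≤ V := sum_le_sum fun j _ => le_add_of_nonneg_left (hc j)
  have hdG : ∑ j ∈ range n, d j ^ 2 ≤ G :=
    sum_le_sum fun j _ => le_add_of_nonneg_left (sq_nonneg _)
  have hterm : ∀ j ∈ range n,
      a j ^ 2 + b j ^ 2 ≤ d j ^ 2 + 2 * (M * V) * d j + 2 * (M * V) ^ 2 := by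
    intro j hj
    obtain ⟨ha0, ha1⟩ := ha j hj
    obtain ⟨hb0, hb1⟩ := hb j hj
    nlinarith [pow_le_pow_left₀ ha0 ha1 2, pow_le_pow_left₀ hb0 hb1 2]
  calc ∑ j ∈ range n, (a j ^ 2 + b j ^ 2)
      ≤ ∑ j ∈ range n, (d j ^ 2 + 2 * (M * V) * d j + 2 * (M * V) ^ 2) := sum_le_sum hterm
    _ = ∑ j ∈ range n, d j ^ 2 + 2 * M * V * ∑ j ∈ range n, d j + 2 * n * M ^ 2 * V ^ 2 := by
      simp only [sum_add_distrib, ← mul_sum, sum_const, card_range, nsmul_eq_mul]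
      ring
    _ ≤ G + 2 * M * V * V + 2 * n * M ^ 2 * (2 * n * G) := by gcongr
    _ ≤ (1 + 2 * n * M) ^ 2 * G := by
      have : 0 ≤ (n : ℝ) * M * G := by positivity
      nlinarith [mul_le_mul_of_nonneg_left hV2 hM]

section Sequences

variable {α : Type*}

def delay [Zero α] (z : ℕ → α) : ℕ → α
  | 0 => 0
  | k + 1 => z k

@[simp] lemma delay_zero [Zero α] (z : ℕ → α) : delay z 0 = 0 := rfl

@[simp] lemma delay_succ [Zero α] (z : ℕ → α) (k : ℕ) : delay z (k + 1) = z k := rfl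

lemma apply_delay {β : Type*} [Zero α] [Zero β] (g : α → β) (hg : g 0 = 0) (z : ℕ → α)
    (j : ℕ) : g (delay z j) = delay (fun k => g (z k)) j := by
  cases j <;> simp [hg]

lemma sum_range_norm_delay_le [SeminormedAddCommGroup α] (z : ℕ → α) (n : ℕ) :
    ∑ k ∈ range n, ‖delay z k‖ ≤ ∑ k ∈ range n, ‖z k‖ := by
  cases n with
  | zero => simp
  | succ n =>
    rw [sum_range_succ', sum_range_succ]
    simp

def extendByZero [Zero α] {n : ℕ} (f : Fin n → α) (j : ℕ) : α :=
  if h : j < n then f ⟨j, h⟩ else 0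

lemma extendByZero_of_lt [Zero α] {n : ℕ} (f : Fin n → α) {j : ℕ} (hj : j < n) :
    extendByZero f j = f ⟨j, hj⟩ := dif_pos hj

lemma sum_ite_val_eq [AddCommMonoid α] {n : ℕ} (f : Fin n → α) (j : ℕ) :
    ∑ k : Fin n, (if j = k then f k else 0) = extendByZero f j := by
  unfold extendByZero
  split_ifs with hj
  · rw [sum_eq_single ⟨j, hj⟩] <;> simp +contextual [Fin.ext_iff, eq_comm]
  · exact sum_eq_zero fun k _ => if_neg (by have := k.isLt; omega)

lemma sum_ite_val_succ_eq [AddCommMonoid α] {n : ℕ} (f : Fin n → α) (j : ℕ) :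
    ∑ k : Fin n, (if j = k + 1 then f k else 0) = delay (extendByZero f) j := by
  cases j with
  | zero => simp
  | succ j => simpa using sum_ite_val_eq f j

end Sequences

section BoundedRecurrence

variable {E : Type*} [SeminormedAddCommGroup E] {T : AddMonoid.End E} {N : ℝ}

lemma AddMonoid.End.norm_pow_apply_le (hN : 0 ≤ N) (hT : ∀ v, ‖T v‖ ≤ N * ‖v‖) (e : ℕ)
    (v : E) : ‖(T ^ e) v‖ ≤ N ^ e * ‖v‖ := by
  induction e generalizing v with
  | zero => simp
  | succ e ih =>
    calc ‖(T ^ (e + 1)) v‖ = ‖(T ^ e) (T v)‖ := by rw [pow_succ, AddMonoid.End.coe_mul]; rfl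
      _ ≤ N ^ e * (N * ‖v‖) := (ih _).trans (by gcongr; exact hT v)
      _ = N ^ (e + 1) * ‖v‖ := by ring

/-- Discrete Duhamel bound: `p` is recovered from its increments `p k - T (p (k - 1))`. -/
lemma norm_pow_apply_le_sum_increments (hN : 0 ≤ N) (hT : ∀ v, ‖T v‖ ≤ N * ‖v‖)
    (p : ℕ → E) {n j e : ℕ} (h : j + e ≤ n) :
    ‖(T ^ e) (p j)‖ ≤
      max 1 (N ^ n) * ∑ k ∈ range (j + 1), ‖p k - delay (fun i => T (p i)) k‖ := by
  have hpow : ∀ s ≤ n, ∀ v, ‖(T ^ s) v‖ ≤ max 1 (N ^ n) * ‖v‖ := fun s hs v =>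
    (T.norm_pow_apply_le hN hT s v).trans (by gcongr; exact pow_le_max_one_pow hN hs)
  induction j generalizing e with
  | zero => simpa using hpow e (by omega) (p 0)
  | succ j ih =>
    have hsplit :
        (T ^ e) (p (j + 1)) = (T ^ e) (p (j + 1) - T (p j)) + (T ^ (e + 1)) (p j) := by
      rw [pow_succ, AddMonoid.End.coe_mul, Function.comp_apply, ← map_add, sub_add_cancel]
    rw [hsplit, sum_range_succ, mul_add, add_comm (max 1 (N ^ n) * _)]
    exact (norm_add_le _ _).trans
      (add_le_add (hpow e (by omega) _) (ih (e := e + 1) (by omega)))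

theorem sum_norm_sq_le_of_delay_system (hN : 0 ≤ N) (hT : ∀ v, ‖T v‖ ≤ N * ‖v‖)
    (p q : ℕ → E) (n : ℕ) :
    ∑ j ∈ range n, (‖p j‖ ^ 2 + ‖q j‖ ^ 2) ≤
      (1 + 2 * n * max 1 (N ^ n)) ^ 2 *
        ∑ j ∈ range n, (‖p j + delay q j‖ ^ 2 + ‖T (p j) + q j‖ ^ 2) := by
  set w := fun j => p j + delay q j
  set z := fun j => T (p j) + q j
  set V := ∑ k ∈ range n, (‖w k‖ + ‖z k‖)
  have hinc : ∀ k, p k - delay (fun i => T (p i)) k = w k - delay z k := by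
    rintro (_ | k) <;> simp [w, z]
  have hU : ∑ k ∈ range n, ‖p k - delay (fun i => T (p i)) k‖ ≤ V := calc
    _ ≤ ∑ k ∈ range n, (‖w k‖ + ‖delay z k‖) := by
      simp_rw [hinc]
      exact sum_le_sum fun k _ => norm_sub_le _ _
    _ ≤ V := by
      simp only [V, sum_add_distrib]
      exact add_le_add_right (sum_range_norm_delay_le z n) _
  have hbound : ∀ j ∈ range n, ∀ e ≤ 1, ‖(T ^ e) (p j)‖ ≤ max 1 (N ^ n) * V := by
    intro j hj e he
    have hj := mem_range.mp hj
    refine (norm_pow_apply_le_sum_increments hN hT p (n := n) (by omega)).trans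
      (mul_le_mul_of_nonneg_left (le_trans ?_ hU) (zero_le_one.trans (le_max_left _ _)))
    exact sum_le_sum_of_subset_of_nonneg (range_subset_range.2 hj) fun _ _ _ => norm_nonneg _
  refine sum_sq_add_sq_le_of_le_sum (zero_le_one.trans (le_max_left _ _))
    (fun _ => norm_nonneg _) (fun _ => norm_nonneg _)
    (fun j hj => ⟨norm_nonneg _, by simpa using hbound j hj 0 zero_le_one⟩)
    (fun j hj => ⟨norm_nonneg _, ?_⟩)
  calc ‖q j‖ = ‖z j - (T ^ 1) (p j)‖ := by simp [z]
    _ ≤ ‖z j‖ + max 1 (N ^ n) * V :=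
      (norm_sub_le _ _).trans (by gcongr; exact hbound j hj 1 le_rfl)

end BoundedRecurrence

section SingularValueBounds

open scoped MatrixOrder ComplexOrder

variable {𝕜 : Type*} [RCLike 𝕜] {p q : Type*} [Fintype p] [Fintype q]

lemma re_star_dotProduct_self (v : p → 𝕜) : RCLike.re (star v ⬝ᵥ v) = ∑ i, ‖v i‖ ^ 2 := by
  simp only [dotProduct, Pi.star_apply, map_sum, RCLike.star_def, RCLike.conj_mul]
  norm_cast

lemma re_star_dotProduct_mul_conjTranspose_mulVec (S : Matrix p q 𝕜) (v : p → 𝕜) :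
    RCLike.re (star v ⬝ᵥ (S * Sᴴ) *ᵥ v) = ∑ j, ‖(Sᴴ *ᵥ v) j‖ ^ 2 := by
  rw [← mulVec_mulVec, dotProduct_mulVec, ← conjTranspose_conjTranspose S, ← star_mulVec,
    conjTranspose_conjTranspose, re_star_dotProduct_self]

lemma Matrix.IsHermitian.le_algebraMap_iSup_eigenvalues [DecidableEq p] {H : Matrix p p 𝕜}
    (hH : H.IsHermitian) : H ≤ algebraMap ℝ (Matrix p p 𝕜) (⨆ i, hH.eigenvalues i) := by
  refine le_algebraMap_of_spectrum_le (fun x hx => ?_) hH.isSelfAdjoint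
  rw [hH.spectrum_real_eq_range_eigenvalues] at hx
  obtain ⟨i, rfl⟩ := hx
  exact le_ciSup (Set.finite_range _).bddAbove i

lemma norm_toEuclideanLin_conjTranspose_le [DecidableEq p] {B : Matrix p q 𝕜} {c : ℝ}
    (hc : 0 ≤ c) (hB : B * Bᴴ ≤ algebraMap ℝ (Matrix p p 𝕜) (c ^ 2)) (v : EuclideanSpace 𝕜 p) :
    ‖toEuclideanLin Bᴴ v‖ ≤ c * ‖v‖ := by
  have h := (RCLike.nonneg_iff.mp ((le_iff.mp hB).dotProduct_mulVec_nonneg v.ofLp)).1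
  rw [sub_mulVec, dotProduct_sub, map_sub, Algebra.algebraMap_eq_smul_one, smul_mulVec,
    one_mulVec, dotProduct_smul, RCLike.smul_re, re_star_dotProduct_self,
    re_star_dotProduct_mul_conjTranspose_mulVec] at h
  rw [← sq_le_sq₀ (norm_nonneg _) (by positivity), mul_pow, EuclideanSpace.norm_sq_eq,
    EuclideanSpace.norm_sq_eq, ofLp_toLpLin, toLin'_apply]
  linarith

lemma one_kronecker_mul_conjTranspose_le {κ ι : Type*} [Fintype κ] [DecidableEq κ] [Fintype ι]
    [DecidableEq ι] (A : Matrix ι ι 𝕜) :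
    ((1 : Matrix κ κ 𝕜) ⊗ₖ A) * ((1 : Matrix κ κ 𝕜) ⊗ₖ A)ᴴ ≤
      algebraMap ℝ (Matrix (κ × ι) (κ × ι) 𝕜) (specNorm A ^ 2) := by
  have hA := (isHermitian_mul_conjTranspose_self A).le_algebraMap_iSup_eigenvalues
  rw [specNorm, Real.sq_sqrt (Real.iSup_nonneg (eigenvalues_self_mul_conjTranspose_nonneg A)),
    conjTranspose_kronecker, ← mul_kronecker_mul, conjTranspose_one, mul_one, le_iff,
    Algebra.algebraMap_eq_smul_one, ← one_kronecker_one, ← kronecker_smul]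
  convert (PosSemidef.one : (1 : Matrix κ κ 𝕜).PosSemidef).kronecker (le_iff.mp hA) using 1
  ext
  simp [mul_sub, Algebra.algebraMap_eq_smul_one]

lemma one_div_le_sigmaMin [DecidableEq p] [Nonempty p] {S : Matrix p q 𝕜} {c : ℝ} (hc : 0 < c)
    (h : ∀ v : p → 𝕜, ∑ i, ‖v i‖ ^ 2 ≤ c ^ 2 * ∑ j, ‖(Sᴴ *ᵥ v) j‖ ^ 2) :
    1 / c ≤ sigmaMin S := by
  set hS := isHermitian_mul_conjTranspose_self S
  have heig : ∀ i, 1 / c ^ 2 ≤ hS.eigenvalues i := by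
    intro i
    have hunit : ∑ j, ‖(hS.eigenvectorBasis i) j‖ ^ 2 = 1 := by
      rw [← EuclideanSpace.norm_sq_eq, hS.eigenvectorBasis.orthonormal.1 i, one_pow]
    have := h (hS.eigenvectorBasis i)
    rw [hunit, ← re_star_dotProduct_mul_conjTranspose_mulVec, ← hS.eigenvalues_eq] at this
    rw [div_le_iff₀ (by positivity)]
    linarith
  rw [sigmaMin, ← Real.sqrt_sq (one_div_pos.2 hc).le, div_pow, one_pow]
  exact Real.sqrt_le_sqrt (le_ciInf heig)

end SingularValueBounds

section BlockShiftMatrix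

variable {𝕜 : Type*} [RCLike 𝕜] {ι : Type*} [Fintype ι]

def blockSeq {n : ℕ} (x : Fin n × ι → 𝕜) (j : ℕ) : EuclideanSpace 𝕜 ι :=
  WithLp.toLp 2 fun c => extendByZero (fun k => x (k, c)) j

lemma sum_range_norm_sq_blockSeq {n : ℕ} (x : Fin n × ι → 𝕜) :
    ∑ j ∈ range n, ‖blockSeq x j‖ ^ 2 = ∑ t, ‖x t‖ ^ 2 := by
  rw [← Fin.sum_univ_eq_sum_range, Fintype.sum_prod_type]
  simp [blockSeq, EuclideanSpace.norm_sq_eq, extendByZero_of_lt]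

variable [DecidableEq ι]

def blockShiftMatrix (n : ℕ) (B : Matrix ι ι 𝕜) :
    Matrix ((Fin n × ι) ⊕ (Fin n × ι)) ((Fin (n + 1) × ι) ⊕ (Fin n × ι)) 𝕜 :=
  fromBlocks (Ek 𝕜 n ⊗ₖ 1) (1 ⊗ₖ B) (Fk 𝕜 n ⊗ₖ 1) (1 ⊗ₖ 1)

variable {n : ℕ} (B : Matrix ι ι 𝕜) (x : (Fin n × ι) ⊕ (Fin n × ι) → 𝕜)

lemma blockShiftMatrix_conjTranspose_mulVec_inl (j : Fin (n + 1)) (c : ι) :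
    ((blockShiftMatrix n B)ᴴ *ᵥ x) (Sum.inl (j, c)) =
      extendByZero (fun k => x (Sum.inl (k, c))) j +
        delay (extendByZero fun k => x (Sum.inr (k, c))) j := by
  simp [blockShiftMatrix, mulVec, dotProduct, Fintype.sum_sum_type, Fintype.sum_prod_type, Ek,
    Fk, one_apply, apply_ite (starRingEnd 𝕜), ite_mul, sum_ite_val_eq, sum_ite_val_succ_eq]

lemma blockShiftMatrix_conjTranspose_mulVec_inr (i : Fin n) (c : ι) :
    ((blockShiftMatrix n B)ᴴ *ᵥ x) (Sum.inr (i, c)) =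
      (Bᴴ *ᵥ fun c' => x (Sum.inl (i, c'))) c + x (Sum.inr (i, c)) := by
  simp [blockShiftMatrix, mulVec, dotProduct, Fintype.sum_sum_type, Fintype.sum_prod_type,
    one_apply, apply_ite (starRingEnd 𝕜), ite_mul]

theorem sum_norm_sq_le_blockShiftMatrix {N : ℝ} (hN : 0 ≤ N) (n : ℕ) {B : Matrix ι ι 𝕜}
    (hB : ∀ v, ‖toEuclideanLin Bᴴ v‖ ≤ N * ‖v‖) (x : (Fin n × ι) ⊕ (Fin n × ι) → 𝕜) :
    ∑ r, ‖x r‖ ^ 2 ≤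
      (1 + 2 * n * max 1 (N ^ n)) ^ 2 * ∑ s, ‖((blockShiftMatrix n B)ᴴ *ᵥ x) s‖ ^ 2 := by
  set y := (blockShiftMatrix n B)ᴴ *ᵥ x
  set p := blockSeq (x ∘ Sum.inl)
  set q := blockSeq (x ∘ Sum.inr)
  have hw : ∀ j ∈ range n, p j + delay q j = blockSeq (y ∘ Sum.inl) j := by
    intro j hj
    have hj := mem_range.mp hj
    ext c
    rw [PiLp.add_apply, apply_delay (fun v : EuclideanSpace 𝕜 ι => v c) rfl]
    simp [p, q, y, blockSeq, extendByZero_of_lt _ hj, extendByZero_of_lt _ (Nat.lt_succ_of_lt hj),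
      blockShiftMatrix_conjTranspose_mulVec_inl]
  have hz : ∀ j ∈ range n, toEuclideanLin Bᴴ (p j) + q j = blockSeq (y ∘ Sum.inr) j := by
    intro j hj
    ext c
    simp [p, q, y, blockSeq, extendByZero_of_lt _ (mem_range.mp hj),
      blockShiftMatrix_conjTranspose_mulVec_inr]
  calc ∑ r, ‖x r‖ ^ 2 = ∑ j ∈ range n, (‖p j‖ ^ 2 + ‖q j‖ ^ 2) := by
        rw [Fintype.sum_sum_type, sum_add_distrib, sum_range_norm_sq_blockSeq,
          sum_range_norm_sq_blockSeq]
        rfl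
    _ ≤ (1 + 2 * n * max 1 (N ^ n)) ^ 2 *
        ∑ j ∈ range n, (‖p j + delay q j‖ ^ 2 + ‖toEuclideanLin Bᴴ (p j) + q j‖ ^ 2) :=
      sum_norm_sq_le_of_delay_system (T := (toEuclideanLin Bᴴ).toAddMonoidHom) hN hB p q n
    _ ≤ (1 + 2 * n * max 1 (N ^ n)) ^ 2 * ∑ s, ‖y s‖ ^ 2 := by
      gcongr
      rw [sum_congr rfl fun j hj => by rw [hw j hj, hz j hj], Fintype.sum_sum_type,
        sum_add_distrib, ← sum_range_norm_sq_blockSeq, ← sum_range_norm_sq_blockSeq,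
        sum_range_succ]
      simp only [Function.comp_def]
      linarith [sq_nonneg ‖blockSeq (fun t => y (Sum.inl t)) n‖]

end BlockShiftMatrix

/-- Lemma 3.2. Lower bound for the smallest singular value `ω₂` of the
block matrix `[[E_η⊗I_{mℓ}, I_{ηm}⊗A], [F_η⊗I_{mℓ}, I_{ηm}⊗I_ℓ]]`. -/
theorem statement1 {𝕜 : Type*} [RCLike 𝕜] (ℓ η m : ℕ) (hℓ : 0 < ℓ) (hη : 0 < η) (hm : 0 < m)
    (A : Matrix (Fin ℓ) (Fin ℓ) 𝕜) :
    1 / (1 + 2 * (η : ℝ) * max 1 (specNorm A ^ η)) ≤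
      sigmaMin (Matrix.fromBlocks
        (Ek 𝕜 η ⊗ₖ (1 : Matrix (Fin m × Fin ℓ) (Fin m × Fin ℓ) 𝕜))
        ((1 : Matrix (Fin η) (Fin η) 𝕜) ⊗ₖ ((1 : Matrix (Fin m) (Fin m) 𝕜) ⊗ₖ A))
        (Fk 𝕜 η ⊗ₖ (1 : Matrix (Fin m × Fin ℓ) (Fin m × Fin ℓ) 𝕜))
        ((1 : Matrix (Fin η) (Fin η) 𝕜) ⊗ₖ
          ((1 : Matrix (Fin m) (Fin m) 𝕜) ⊗ₖ (1 : Matrix (Fin ℓ) (Fin ℓ) 𝕜)))) := by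
  have : Nonempty ((Fin η × (Fin m × Fin ℓ)) ⊕ (Fin η × (Fin m × Fin ℓ))) :=
    ⟨.inl (⟨0, hη⟩, ⟨0, hm⟩, ⟨0, hℓ⟩)⟩
  have hA (v : EuclideanSpace 𝕜 (Fin m × Fin ℓ)) :
      ‖toEuclideanLin ((1 : Matrix (Fin m) (Fin m) 𝕜) ⊗ₖ A)ᴴ v‖ ≤ specNorm A * ‖v‖ :=
    norm_toEuclideanLin_conjTranspose_le (Real.sqrt_nonneg _)
      (one_kronecker_mul_conjTranspose_le A) v
  rw [one_kronecker_one]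
  exact one_div_le_sigmaMin (by positivity)
    (sum_norm_sq_le_blockShiftMatrix (Real.sqrt_nonneg _) η hA)
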